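/- Consider the linear system Ax = b where A ∈ ℝ^{N×N} is symmetric positive definite with distinct eigenvalues 0 < λ_1 < ... < λ_N and orthonormal eigenvectors v_1, ..., v_N, and let κ = λ_N/λ_1. Let the iterates be generated by the minimal gradient (MG) method x_{n+1} = x_n − α_n^MG g_n, where g_n = A x_n − b and α_n^MG = (g_nᵀ A g_n)/(g_nᵀ A² g_n). Write g_n = Σ_{i=1}^N ζ_{i,n} v_i. If the starting point x_0 satisfies ζ_{1,0} ≠ 0 and ζ_{N,0} ≠ 0 (hence g_n ≠ 0 for all n), then there exists a constant c ≠ 0 such that lim_{n→∞} ‖g_{n+1}‖² / ‖g_n‖² = c² (κ − 1)² / ((c² + κ)(1 + c² κ)), where ‖·‖ denotes the Euclidean norm. -/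

import Mathlib

open Filter Topology Matrix

section AuxMG

variable {N : ℕ}

private lemma mg_dot_sum_left (c : Fin N → ℝ) (v : Fin N → Fin N → ℝ) (w : Fin N → ℝ) :
    (∑ i, c i • v i) ⬝ᵥ w = ∑ i, c i * (v i ⬝ᵥ w) := by
  simp only [dotProduct, Finset.sum_apply, Pi.smul_apply, smul_eq_mul, Finset.sum_mul,
    Finset.mul_sum]
  rw [Finset.sum_comm]
  exact Finset.sum_congr rfl fun i _ => Finset.sum_congr rfl fun x _ => by ring

private lemma mg_mulVec_sum_smul (A : Matrix (Fin N) (Fin N) ℝ) (c : Fin N → ℝ)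
    (v : Fin N → Fin N → ℝ) :
    A *ᵥ (∑ i, c i • v i) = ∑ i, c i • (A *ᵥ v i) := by
  have h1 : A *ᵥ (∑ i, c i • v i) = A.mulVecLin (∑ i, c i • v i) := rfl
  rw [h1, map_sum]
  exact Finset.sum_congr rfl fun i _ => by simp [Matrix.mulVecLin_apply, Matrix.mulVec_smul]

private lemma mg_sym_half (f e : Fin N → Fin N → ℝ) (h : ∀ i j, f i j + f j i = e i j) :
    ∑ i, ∑ j, f i j = (1/2) * ∑ i, ∑ j, e i j := by
  have h2 : ∑ i, ∑ j, e i j = ∑ i, ∑ j, (f i j + f j i) :=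
    Finset.sum_congr rfl fun i _ => Finset.sum_congr rfl fun j _ => (h i j).symm
  have h3 : ∑ i, ∑ j, (f i j + f j i) = (∑ i, ∑ j, f i j) + ∑ i, ∑ j, f j i := by
    simp [Finset.sum_add_distrib]
  have h4 : ∑ i : Fin N, ∑ j, f j i = ∑ i, ∑ j, f i j := Finset.sum_comm
  rw [h2, h3, h4]; ring

private lemma mg_cs_ident (a l u : Fin N → ℝ) :
    (∑ i, a i * u i) * (∑ i, a i * l i ^ 2 * u i) - (∑ i, a i * l i * u i) ^ 2
      = (1/2) * ∑ i, ∑ j, (u i * u j * (a i * a j)) * (l i - l j) ^ 2 := by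
  rw [Finset.sum_mul_sum, sq (∑ i, a i * l i * u i), Finset.sum_mul_sum,
    ← Finset.sum_sub_distrib]
  simp only [← Finset.sum_sub_distrib]
  exact mg_sym_half _ _ fun i j => by ring

private lemma mg_swap12 (g : Fin N → Fin N → Fin N → ℝ) :
    ∑ i, ∑ j, ∑ k, g i j k = ∑ i, ∑ j, ∑ k, g j i k := Finset.sum_comm

private lemma mg_swap23 (g : Fin N → Fin N → Fin N → ℝ) :
    ∑ i, ∑ j, ∑ k, g i j k = ∑ i, ∑ j, ∑ k, g i k j :=
  Finset.sum_congr rfl fun _ _ => Finset.sum_comm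

private lemma mg_sym_sixth (f e : Fin N → Fin N → Fin N → ℝ)
    (h : ∀ i j k, f i j k + f i k j + f j i k + f j k i + f k i j + f k j i = e i j k) :
    ∑ i, ∑ j, ∑ k, f i j k = (1/6) * ∑ i, ∑ j, ∑ k, e i j k := by
  have h2 : ∑ i, ∑ j, ∑ k, e i j k
      = ∑ i, ∑ j, ∑ k, (f i j k + f i k j + f j i k + f j k i + f k i j + f k j i) :=
    Finset.sum_congr rfl fun i _ => Finset.sum_congr rfl fun j _ =>
      Finset.sum_congr rfl fun k _ => (h i j k).symm
  have e1 : ∑ i, ∑ j, ∑ k, f i k j = ∑ i, ∑ j, ∑ k, f i j k := (mg_swap23 f).symm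
  have e2 : ∑ i, ∑ j, ∑ k, f j i k = ∑ i, ∑ j, ∑ k, f i j k := (mg_swap12 f).symm
  have e3 : ∑ i, ∑ j, ∑ k, f j k i = ∑ i, ∑ j, ∑ k, f i j k :=
    ((mg_swap12 (fun a b c => f a c b)).symm).trans e1
  have e4 : ∑ i, ∑ j, ∑ k, f k i j = ∑ i, ∑ j, ∑ k, f i j k :=
    ((mg_swap23 (fun a b c => f b a c)).symm).trans e2
  have e5 : ∑ i, ∑ j, ∑ k, f k j i = ∑ i, ∑ j, ∑ k, f i j k :=
    (mg_swap23 (fun a b c => f c b a)).trans e3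
  rw [h2]
  simp only [Finset.sum_add_distrib]
  rw [e1, e2, e3, e4, e5]; ring

private lemma mg_triple_prod (a b c : Fin N → ℝ) :
    (∑ i, a i) * (∑ i, b i) * (∑ i, c i) = ∑ i, ∑ j, ∑ k, a i * b j * c k := by
  rw [Finset.sum_mul_sum]
  rw [Finset.sum_mul]
  refine Finset.sum_congr rfl fun i _ => ?_
  rw [Finset.sum_mul]
  refine Finset.sum_congr rfl fun j _ => ?_
  rw [Finset.mul_sum]

private lemma mg_hankel_nonneg (l u : Fin N → ℝ) (hu : ∀ i, 0 ≤ u i) :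
    0 ≤ (∑ i, u i) * (∑ i, l i ^ 2 * u i) * (∑ i, l i ^ 4 * u i)
        + 2 * ((∑ i, l i * u i) * (∑ i, l i ^ 2 * u i) * (∑ i, l i ^ 3 * u i))
        - (∑ i, l i ^ 2 * u i) ^ 3
        - (∑ i, l i * u i) ^ 2 * (∑ i, l i ^ 4 * u i)
        - (∑ i, u i) * (∑ i, l i ^ 3 * u i) ^ 2 := by
  have key : (∑ i, u i) * (∑ i, l i ^ 2 * u i) * (∑ i, l i ^ 4 * u i)
        + 2 * ((∑ i, l i * u i) * (∑ i, l i ^ 2 * u i) * (∑ i, l i ^ 3 * u i))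
        - (∑ i, l i ^ 2 * u i) ^ 3
        - (∑ i, l i * u i) ^ 2 * (∑ i, l i ^ 4 * u i)
        - (∑ i, u i) * (∑ i, l i ^ 3 * u i) ^ 2
      = ∑ i, ∑ j, ∑ k, ((u i * u j * u k) *
          (l j ^ 2 * l k ^ 4 + 2 * (l i * l j ^ 2 * l k ^ 3) - l i ^ 2 * l j ^ 2 * l k ^ 2
            - l i * l j * l k ^ 4 - l j ^ 3 * l k ^ 3)) := by
    have p1 := mg_triple_prod (fun i => u i) (fun i => l i ^ 2 * u i) (fun i => l i ^ 4 * u i)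
    have p2 := mg_triple_prod (fun i => l i * u i) (fun i => l i ^ 2 * u i)
      (fun i => l i ^ 3 * u i)
    have p3 := mg_triple_prod (fun i => l i ^ 2 * u i) (fun i => l i ^ 2 * u i)
      (fun i => l i ^ 2 * u i)
    have p4 := mg_triple_prod (fun i => l i * u i) (fun i => l i * u i) (fun i => l i ^ 4 * u i)
    have p5 := mg_triple_prod (fun i => u i) (fun i => l i ^ 3 * u i) (fun i => l i ^ 3 * u i)
    have q3 : (∑ i, l i ^ 2 * u i) ^ 3
        = (∑ i, l i ^ 2 * u i) * (∑ i, l i ^ 2 * u i) * (∑ i, l i ^ 2 * u i) := by ring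
    have q4 : (∑ i, l i * u i) ^ 2 * (∑ i, l i ^ 4 * u i)
        = (∑ i, l i * u i) * (∑ i, l i * u i) * (∑ i, l i ^ 4 * u i) := by ring
    have q5 : (∑ i, u i) * (∑ i, l i ^ 3 * u i) ^ 2
        = (∑ i, u i) * (∑ i, l i ^ 3 * u i) * (∑ i, l i ^ 3 * u i) := by ring
    rw [q3, q4, q5, p1, p2, p3, p4, p5]
    simp only [Finset.mul_sum]
    simp only [← Finset.sum_add_distrib, ← Finset.sum_sub_distrib]
    exact Finset.sum_congr rfl fun i _ => Finset.sum_congr rfl fun j _ =>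
      Finset.sum_congr rfl fun k _ => by ring
  rw [key, mg_sym_sixth _ (fun i j k => (u i * u j * u k) *
      ((l i - l j) * (l j - l k) * (l i - l k)) ^ 2) (fun i j k => by ring)]
  have h0 : 0 ≤ ∑ i, ∑ j, ∑ k, (u i * u j * u k) *
      ((l i - l j) * (l j - l k) * (l i - l k)) ^ 2 := by
    refine Finset.sum_nonneg fun i _ => Finset.sum_nonneg fun j _ =>
      Finset.sum_nonneg fun k _ => ?_
    have := hu i; have := hu j; have := hu k
    positivity
  linarith

private lemma mg_quad_expand (l z : Fin N → ℝ) (B C : ℝ) (k : ℕ) :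
    ∑ i, l i ^ k * ((C - B * l i) * z i) ^ 2
      = C ^ 2 * (∑ i, l i ^ k * z i ^ 2) - 2 * B * C * (∑ i, l i ^ (k + 1) * z i ^ 2)
        + B ^ 2 * (∑ i, l i ^ (k + 2) * z i ^ 2) := by
  simp only [Finset.mul_sum]
  rw [← Finset.sum_sub_distrib, ← Finset.sum_add_distrib]
  refine Finset.sum_congr rfl fun i _ => ?_
  simp only [pow_succ]
  ring

private lemma mg_kalt {a b : ℝ} (ha : 0 < a) (hb : 0 < b) :
    (a + b)^2 / (4 * (a * b)) = (b / a + 1)^2 / (4 * (b / a)) := by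
  have ha' := ha.ne'
  have hb' := hb.ne'
  field_simp
  ring

private lemma mg_heq2 {k : ℝ} (h : 0 < k + 1) :
    (k - 1)^2 / (k + 1)^2 = 1 - 4 * k / (k + 1)^2 := by
  have h' := h.ne'
  field_simp
  ring

end AuxMG

theorem mg_gradient_norm_ratio_limit
    (N : ℕ) (hN : 2 ≤ N)
    (A : Matrix (Fin N) (Fin N) ℝ) (b : Fin N → ℝ)
    (hA : A.PosDef)
    (lam : Fin N → ℝ) (v : Fin N → Fin N → ℝ)
    (hlam0 : 0 < lam ⟨0, by omega⟩)
    (hmono : StrictMono lam)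
    (heig : ∀ i, A.mulVec (v i) = lam i • v i)
    (horth : ∀ i j, v i ⬝ᵥ v j = if i = j then (1 : ℝ) else 0)
    (x g : ℕ → Fin N → ℝ) (alpha : ℕ → ℝ)
    (hg : ∀ n, g n = A.mulVec (x n) - b)
    (halpha : ∀ n, alpha n =
      (g n ⬝ᵥ A.mulVec (g n)) / (g n ⬝ᵥ A.mulVec (A.mulVec (g n))))
    (hx : ∀ n, x (n + 1) = x n - alpha n • g n)
    (zeta : ℕ → Fin N → ℝ)
    (hzeta : ∀ n, g n = ∑ i, zeta n i • v i)
    (hz1 : zeta 0 ⟨0, by omega⟩ ≠ 0)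
    (hzN : zeta 0 ⟨N - 1, by omega⟩ ≠ 0) :
    ∃ c : ℝ, c ≠ 0 ∧
      Tendsto (fun n => (g (n + 1) ⬝ᵥ g (n + 1)) / (g n ⬝ᵥ g n)) atTop
        (𝓝 (c ^ 2 * ((lam ⟨N - 1, by omega⟩ / lam ⟨0, by omega⟩) - 1) ^ 2 /
          ((c ^ 2 + (lam ⟨N - 1, by omega⟩ / lam ⟨0, by omega⟩)) * (1 + c ^ 2 * (lam ⟨N - 1, by omega⟩ / lam ⟨0, by omega⟩))))) := by
  have hN0 : 0 < N := by omega
  have hN1 : N - 1 < N := by omega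
  set i0 : Fin N := ⟨0, hN0⟩ with hi0
  set iN : Fin N := ⟨N - 1, hN1⟩ with hiN
  have hi0N : i0 < iN := by
    rw [Fin.lt_def]; simp [hi0, hiN]; omega
  have hlpos : ∀ i, 0 < lam i := fun i =>
    lt_of_lt_of_le hlam0 (hmono.monotone (by exact Fin.mk_le_mk.mpr (Nat.zero_le _)))
  have hlN : lam i0 < lam iN := hmono hi0N
  -- coordinates
  have hc : ∀ n i, g n ⬝ᵥ v i = zeta n i := by
    intro n i
    rw [hzeta n, mg_dot_sum_left]
    simp [horth]
  have hAg : ∀ n, A *ᵥ g n = ∑ i, (zeta n i * lam i) • v i := by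
    intro n
    rw [hzeta n, mg_mulVec_sum_smul]
    exact Finset.sum_congr rfl fun i _ => by rw [heig i, smul_smul]
  have hAAg : ∀ n, A *ᵥ (A *ᵥ g n) = ∑ i, (zeta n i * lam i * lam i) • v i := by
    intro n
    rw [hAg n, mg_mulVec_sum_smul]
    exact Finset.sum_congr rfl fun i _ => by rw [heig i, smul_smul]
  have hdot : ∀ n (c : Fin N → ℝ), g n ⬝ᵥ (∑ i, c i • v i) = ∑ i, c i * zeta n i := by
    intro n c
    rw [dotProduct_comm, mg_dot_sum_left]
    exact Finset.sum_congr rfl fun i _ => by rw [dotProduct_comm, hc]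
  -- moments
  set m : ℕ → ℕ → ℝ := fun k n => ∑ i, lam i ^ k * zeta n i ^ 2 with hm
  clear_value m
  have hd0 : ∀ n, g n ⬝ᵥ g n = m 0 n := by
    intro n
    rw [show g n ⬝ᵥ g n = g n ⬝ᵥ (∑ i, zeta n i • v i) from by rw [← hzeta n], hdot, hm]
    exact Finset.sum_congr rfl fun i _ => by ring
  have hd1 : ∀ n, g n ⬝ᵥ (A *ᵥ g n) = m 1 n := by
    intro n
    rw [hAg n, hdot, hm]
    exact Finset.sum_congr rfl fun i _ => by ring
  have hd2 : ∀ n, g n ⬝ᵥ (A *ᵥ (A *ᵥ g n)) = m 2 n := by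
    intro n
    rw [hAAg n, hdot, hm]
    exact Finset.sum_congr rfl fun i _ => by ring
  have hgrec : ∀ n, g (n + 1) = g n - alpha n • (A *ᵥ g n) := by
    intro n
    rw [hg (n + 1), hx n, Matrix.mulVec_sub, Matrix.mulVec_smul, hg n]
    abel
  have hrec : ∀ n i, zeta (n + 1) i = (1 - alpha n * lam i) * zeta n i := by
    intro n i
    rw [← hc (n + 1) i, hgrec n, sub_dotProduct, smul_dotProduct]
    rw [show (A *ᵥ g n) ⬝ᵥ v i = ∑ j, (zeta n j * lam j) * (v j ⬝ᵥ v i) from by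
      rw [hAg n, mg_dot_sum_left]]
    simp [horth, hc]
    ring
  have halpham : ∀ n, alpha n = m 1 n / m 2 n := by
    intro n; rw [halpha n, hd1 n, hd2 n]
  have hmpos : ∀ n, zeta n i0 ≠ 0 → ∀ k, 0 < m k n := by
    intro n h k
    rw [hm]
    refine Finset.sum_pos' (fun i _ => mul_nonneg (pow_nonneg (hlpos i).le k) (sq_nonneg _))
      ⟨i0, Finset.mem_univ _, ?_⟩
    exact mul_pos (pow_pos (hlpos i0) k)
      (lt_of_le_of_ne (sq_nonneg _) (Ne.symm (pow_ne_zero 2 h)))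
  have hle0 : ∀ i, lam i0 ≤ lam i := fun i =>
    hmono.monotone (by exact Fin.mk_le_mk.mpr (Nat.zero_le _))
  have hleN : ∀ i, lam i ≤ lam iN := fun i =>
    hmono.monotone (by rw [Fin.le_def]; exact Nat.le_sub_one_of_lt i.isLt)
  have hnz : ∀ n, zeta n i0 ≠ 0 ∧ zeta n iN ≠ 0 := by
    intro n
    induction n with
    | zero => exact ⟨hz1, hzN⟩
    | succ n ih =>
      obtain ⟨h1, h2⟩ := ih
      have hm2 : 0 < m 2 n := hmpos n h1 2
      have hA0 : 0 < m 2 n - lam i0 * m 1 n := by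
        have hsum : m 2 n - lam i0 * m 1 n
            = ∑ i, (lam i * (lam i - lam i0)) * zeta n i ^ 2 := by
          rw [hm]; rw [Finset.mul_sum, ← Finset.sum_sub_distrib]
          exact Finset.sum_congr rfl fun i _ => by ring
        rw [hsum]
        refine Finset.sum_pos' (fun i _ => ?_) ⟨iN, Finset.mem_univ _, ?_⟩
        · have h3 : 0 ≤ lam i - lam i0 := sub_nonneg.mpr (hle0 i)
          have h4 := (hlpos i).le
          positivity
        · have h3 : 0 < lam iN - lam i0 := sub_pos.mpr hlN
          have h4 := hlpos iN
          positivity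
      have hAN : 0 < lam iN * m 1 n - m 2 n := by
        have hsum : lam iN * m 1 n - m 2 n
            = ∑ i, (lam i * (lam iN - lam i)) * zeta n i ^ 2 := by
          rw [hm]; rw [Finset.mul_sum, ← Finset.sum_sub_distrib]
          exact Finset.sum_congr rfl fun i _ => by ring
        rw [hsum]
        refine Finset.sum_pos' (fun i _ => ?_) ⟨i0, Finset.mem_univ _, ?_⟩
        · have h3 : 0 ≤ lam iN - lam i := sub_nonneg.mpr (hleN i)
          have h4 := (hlpos i).le
          positivity
        · have h3 : 0 < lam iN - lam i0 := sub_pos.mpr hlN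
          have h4 := hlpos i0
          positivity
      have hf0 : 1 - alpha n * lam i0 = (m 2 n - lam i0 * m 1 n) / m 2 n := by
        rw [halpham n]; field_simp
      have hfN : 1 - alpha n * lam iN = -((lam iN * m 1 n - m 2 n) / m 2 n) := by
        rw [halpham n]; field_simp; ring
      constructor
      · rw [hrec n i0, hf0]
        exact mul_ne_zero (ne_of_gt (div_pos hA0 hm2)) h1
      · rw [hrec n iN, hfN]
        exact mul_ne_zero (ne_of_lt (neg_neg_iff_pos.mpr (div_pos hAN hm2))) h2
  have hm0pos : ∀ n k, 0 < m k n := fun n => hmpos n (hnz n).1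
  have hstep : ∀ n i, (1 - alpha n * lam i) * m 2 n = m 2 n - m 1 n * lam i := by
    intro n i
    have h2 := (hm0pos n 2).ne'
    rw [halpham n]
    field_simp
  have hmrec : ∀ n k, m k (n+1) * (m 2 n)^2
      = m k n * (m 2 n)^2 - 2 * m 1 n * m (k+1) n * m 2 n + (m 1 n)^2 * m (k+2) n := by
    intro n k
    have hmk : ∀ k n, m k n = ∑ i, lam i ^ k * zeta n i ^ 2 :=
    fun k n => congrFun (congrFun hm k) n
    calc m k (n+1) * (m 2 n)^2
        = ∑ i, lam i ^ k * ((m 2 n - m 1 n * lam i) * zeta n i)^2 := by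
          rw [hmk k (n+1), Finset.sum_mul]
          refine Finset.sum_congr rfl fun i _ => ?_
          rw [hrec n i, ← hstep n i]
          ring
      _ = m k n * (m 2 n)^2 - 2 * m 1 n * m (k+1) n * m 2 n + (m 1 n)^2 * m (k+2) n := by
          rw [mg_quad_expand lam (zeta n) (m 1 n) (m 2 n) k, ← hmk k n, ← hmk (k+1) n,
            ← hmk (k+2) n]
          ring
  set J : ℕ → ℝ := fun n => m 0 n * m 2 n / (m 1 n)^2 with hJ
  clear_value J
  have hJmono : ∀ n, J n ≤ J (n+1) := by
    intro n
    have h1 : 0 < (m 1 n)^2 := pow_pos (hm0pos n 1) 2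
    have h1' : 0 < (m 1 (n+1))^2 := pow_pos (hm0pos (n+1) 1) 2
    rw [hJ]
    simp only []
    rw [div_le_div_iff₀ h1 h1']
    have hH : 0 ≤ m 0 n * m 2 n * m 4 n + 2 * (m 1 n * m 2 n * m 3 n) - (m 2 n)^3
        - (m 1 n)^2 * m 4 n - m 0 n * (m 3 n)^2 := by
      have h := mg_hankel_nonneg lam (fun i => zeta n i ^ 2) (fun i => sq_nonneg _)
      rw [hm]
      simp only [pow_zero, one_mul, pow_one]
      exact h
    have r0 := hmrec n 0
    have r1 := hmrec n 1
    have r2 := hmrec n 2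
    norm_num at r0 r1 r2
    have keyeq : (m 0 (n+1) * (m 2 n)^2) * (m 2 (n+1) * (m 2 n)^2) * (m 1 n)^2
        - (m 0 n * m 2 n) * (m 1 (n+1) * (m 2 n)^2)^2
        = (m 1 n)^4 * (m 0 n * m 2 n * m 4 n + 2 * (m 1 n * m 2 n * m 3 n) - (m 2 n)^3
            - (m 1 n)^2 * m 4 n - m 0 n * (m 3 n)^2) * m 2 n := by
      rw [r0, r1, r2]
      ring
    have h2 : (m 0 (n+1) * m 2 (n+1) * (m 1 n)^2 - m 0 n * m 2 n * (m 1 (n+1))^2)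
        * (m 2 n)^4
        = (m 1 n)^4 * (m 0 n * m 2 n * m 4 n + 2 * (m 1 n * m 2 n * m 3 n) - (m 2 n)^3
            - (m 1 n)^2 * m 4 n - m 0 n * (m 3 n)^2) * m 2 n := by
      linear_combination keyeq
    have h3 : 0 ≤ (m 0 (n+1) * m 2 (n+1) * (m 1 n)^2 - m 0 n * m 2 n * (m 1 (n+1))^2)
        * (m 2 n)^4 := by
      rw [h2]
      have h4 : 0 ≤ (m 1 n)^4 := by positivity
      exact mul_nonneg (mul_nonneg h4 hH) (hm0pos n 2).le
    have h6 := div_nonneg h3 (pow_pos (hm0pos n 2) 4).le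
    rw [mul_div_cancel_right₀ _ (ne_of_gt (pow_pos (hm0pos n 2) 4))] at h6
    linarith
  have hmk : ∀ k n, m k n = ∑ i, lam i ^ k * zeta n i ^ 2 :=
    fun k n => congrFun (congrFun hm k) n
  -- Kantorovich bound
  have hK : ∀ n, J n ≤ (lam i0 + lam iN)^2 / (4 * (lam i0 * lam iN)) := by
    intro n
    have h1 : 0 < (m 1 n)^2 := pow_pos (hm0pos n 1) 2
    have hl0 := hlpos i0
    have hlNp := hlpos iN
    have hden : (0:ℝ) < 4 * (lam i0 * lam iN) := by positivity
    rw [hJ]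
    simp only []
    rw [div_le_div_iff₀ h1 hden]
    have hcheb : lam i0 * lam iN * m 0 n + m 2 n ≤ (lam i0 + lam iN) * m 1 n := by
      have hpt : ∀ i, lam i0 * lam iN * (lam i ^ 0 * zeta n i ^ 2) + lam i ^ 2 * zeta n i ^ 2
          ≤ (lam i0 + lam iN) * (lam i ^ 1 * zeta n i ^ 2) := by
        intro i
        have h2 : 0 ≤ (lam i - lam i0) * (lam iN - lam i) :=
          mul_nonneg (sub_nonneg.mpr (hle0 i)) (sub_nonneg.mpr (hleN i))
        nlinarith [sq_nonneg (zeta n i)]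
      have e1 : lam i0 * lam iN * m 0 n + m 2 n
          = ∑ i, (lam i0 * lam iN * (lam i ^ 0 * zeta n i ^ 2) + lam i ^ 2 * zeta n i ^ 2) := by
        rw [hmk 0 n, hmk 2 n, Finset.mul_sum, Finset.sum_add_distrib]
      have e2 : (lam i0 + lam iN) * m 1 n
          = ∑ i, (lam i0 + lam iN) * (lam i ^ 1 * zeta n i ^ 2) := by
        rw [hmk 1 n, Finset.mul_sum]
      rw [e1, e2]
      exact Finset.sum_le_sum fun i _ => hpt i
    have h7 : 0 ≤ lam i0 * lam iN * m 0 n + m 2 n := by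
      have := (hm0pos n 0).le; have := (hm0pos n 2).le
      positivity
    have h8 := mul_self_le_mul_self h7 hcheb
    nlinarith [h8, sq_nonneg (lam i0 * lam iN * m 0 n - m 2 n)]
  -- J 0 > 1
  have hJ0 : 1 < J 0 := by
    have h1 : 0 < (m 1 0)^2 := pow_pos (hm0pos 0 1) 2
    rw [hJ]
    simp only []
    rw [lt_div_iff₀ h1, one_mul]
    have hcs := mg_cs_ident (fun _ => (1:ℝ)) lam (fun i => zeta 0 i ^ 2)
    simp only [one_mul, mul_one] at hcs
    have b0 : (∑ i, zeta 0 i ^ 2) = m 0 0 := by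
      rw [hmk 0 0]; exact Finset.sum_congr rfl fun i _ => by ring
    have b1 : (∑ i, lam i * zeta 0 i ^ 2) = m 1 0 := by
      rw [hmk 1 0]; exact Finset.sum_congr rfl fun i _ => by ring
    have b2 : (∑ i, lam i ^ 2 * zeta 0 i ^ 2) = m 2 0 := (hmk 2 0).symm
    rw [b0, b1, b2] at hcs
    have hpos : 0 < (1/2 : ℝ) * ∑ i, ∑ j, (zeta 0 i ^ 2 * zeta 0 j ^ 2) * (lam i - lam j)^2 := by
      have hterm : ∀ i j : Fin N, 0 ≤ (zeta 0 i ^ 2 * zeta 0 j ^ 2) * (lam i - lam j)^2 :=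
        fun i j => by positivity
      have hinner : ∀ i : Fin N, 0 ≤ ∑ j, (zeta 0 i ^ 2 * zeta 0 j ^ 2) * (lam i - lam j)^2 :=
        fun i => Finset.sum_nonneg fun j _ => hterm i j
      have h1 : (zeta 0 i0 ^ 2 * zeta 0 iN ^ 2) * (lam i0 - lam iN)^2
          ≤ ∑ j, (zeta 0 i0 ^ 2 * zeta 0 j ^ 2) * (lam i0 - lam j)^2 :=
        Finset.single_le_sum (fun j _ => hterm i0 j) (Finset.mem_univ iN)
      have h2 : (∑ j, (zeta 0 i0 ^ 2 * zeta 0 j ^ 2) * (lam i0 - lam j)^2)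
          ≤ ∑ i, ∑ j, (zeta 0 i ^ 2 * zeta 0 j ^ 2) * (lam i - lam j)^2 :=
        Finset.single_le_sum (fun i _ => hinner i) (Finset.mem_univ i0)
      have h3 : 0 < (zeta 0 i0 ^ 2 * zeta 0 iN ^ 2) * (lam i0 - lam iN)^2 := by
        have hne : lam i0 - lam iN ≠ 0 := sub_ne_zero.mpr (ne_of_lt hlN)
        positivity
      linarith
    nlinarith [hcs, hpos]
  -- limit of J
  have hJb : BddAbove (Set.range J) := by
    refine ⟨(lam i0 + lam iN)^2 / (4 * (lam i0 * lam iN)), ?_⟩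
    rintro _ ⟨n, rfl⟩
    exact hK n
  have hJm : Monotone J := monotone_nat_of_le_succ hJmono
  set L : ℝ := ⨆ n, J n with hLdef
  clear_value L
  have htend : Tendsto J atTop (𝓝 L) := hLdef ▸ tendsto_atTop_ciSup hJm hJb
  have hL1 : 1 < L := lt_of_lt_of_le hJ0 (hLdef ▸ le_ciSup hJb 0)
  have hLpos : 0 < L := by linarith
  have hLne : L ≠ 0 := ne_of_gt hLpos
  have hLK : L ≤ (lam i0 + lam iN)^2 / (4 * (lam i0 * lam iN)) := hLdef ▸ ciSup_le hK
  -- ratio identity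
  have hratio : ∀ n, (g (n+1) ⬝ᵥ g (n+1)) / (g n ⬝ᵥ g n) = 1 - 1 / J n := by
    intro n
    rw [hd0 (n+1), hd0 n]
    have r0 := hmrec n 0
    norm_num at r0
    have h0 := (hm0pos n 0).ne'
    have h1 := (hm0pos n 1).ne'
    have h2 := (hm0pos n 2).ne'
    have e2 : (m 0 (n+1) * m 2 n) * m 2 n = (m 0 n * m 2 n - (m 1 n)^2) * m 2 n := by
      linear_combination r0
    have e : m 0 (n+1) * m 2 n = m 0 n * m 2 n - (m 1 n)^2 := mul_right_cancel₀ h2 e2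
    have hJval : 1 - 1 / J n = (m 0 n * m 2 n - (m 1 n)^2) / (m 0 n * m 2 n) := by
      have hJn : J n = m 0 n * m 2 n / (m 1 n)^2 := congrFun hJ n
      rw [hJn, one_div_div, sub_div, div_self (ne_of_gt (mul_pos (hm0pos n 0) (hm0pos n 2)))]
    rw [hJval, div_eq_div_iff (hm0pos n 0).ne' (mul_pos (hm0pos n 0) (hm0pos n 2)).ne']
    linear_combination m 0 n * e
  have htr : Tendsto (fun n => 1 - 1 / J n) atTop (𝓝 (1 - 1 / L)) :=
    tendsto_const_nhds.sub (tendsto_const_nhds.div htend hLne)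
  -- kappa
  set kap : ℝ := lam iN / lam i0 with hkap
  clear_value kap
  have hl0 := hlpos i0
  have hlNp := hlpos iN
  have hkap1 : 1 < kap := by rw [hkap]; exact (one_lt_div hl0).mpr hlN
  have hkpos : 0 < kap := by linarith
  set r : ℝ := 1 - 1 / L with hrdef
  clear_value r
  have hr0 : 0 < r := by
    have : 1 / L < 1 := by rw [div_lt_one hLpos]; exact hL1
    rw [hrdef]; linarith
  have hKalt : (lam i0 + lam iN)^2 / (4 * (lam i0 * lam iN)) = (kap + 1)^2 / (4 * kap) := by
    rw [hkap]
    exact mg_kalt hl0 hlNp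
  have hrK : r ≤ (kap - 1)^2 / (kap + 1)^2 := by
    have hK'pos : 0 < (kap + 1)^2 / (4 * kap) := by positivity
    have hLK' : L ≤ (kap + 1)^2 / (4 * kap) := by rw [← hKalt]; exact hLK
    have hinv : 1 / ((kap + 1)^2 / (4 * kap)) ≤ 1 / L :=
      one_div_le_one_div_of_le hLpos hLK'
    have hkne : (kap + 1) ≠ 0 := by positivity
    have heq1 : 1 / ((kap + 1)^2 / (4 * kap)) = 4 * kap / (kap + 1)^2 := by
      rw [one_div_div]
    have heq2 : (kap - 1)^2 / (kap + 1)^2 = 1 - 4 * kap / (kap + 1)^2 :=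
      mg_heq2 (by linarith)
    rw [hrdef, heq2]
    rw [heq1] at hinv
    linarith
  -- IVT
  have hcont : ContinuousOn (fun s : ℝ => s * (kap - 1)^2 / ((s + kap) * (1 + s * kap)))
      (Set.Icc 0 1) := by
    apply ContinuousOn.div
    · exact (continuous_id.mul continuous_const).continuousOn
    · exact ((continuous_id.add continuous_const).mul
        (continuous_const.add (continuous_id.mul continuous_const))).continuousOn
    · intro s hs
      obtain ⟨hs0, -⟩ := hs
      have h1 : 0 < s + kap := by linarith
      have h2 : 0 < 1 + s * kap := by nlinarith
      exact ne_of_gt (mul_pos h1 h2)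
  have hmem : r ∈ Set.Icc ((fun s : ℝ => s * (kap - 1)^2 / ((s + kap) * (1 + s * kap))) 0)
      ((fun s : ℝ => s * (kap - 1)^2 / ((s + kap) * (1 + s * kap))) 1) := by
    constructor
    · simp only []
      rw [zero_mul, zero_div]
      exact hr0.le
    · simp only []
      have : (1:ℝ) * (kap - 1)^2 / ((1 + kap) * (1 + 1 * kap)) = (kap - 1)^2 / (kap + 1)^2 := by
        rw [one_mul, one_mul]
        ring_nf
      rw [this]
      exact hrK
  obtain ⟨s, hsIcc, hsval⟩ := intermediate_value_Icc zero_le_one hcont hmem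
  simp only [] at hsval
  have hs0 : 0 < s := by
    rcases lt_or_eq_of_le hsIcc.1 with h | h
    · exact h
    · exfalso
      rw [← h, zero_mul, zero_div] at hsval
      exact absurd hsval.symm (ne_of_gt hr0)
  refine ⟨Real.sqrt s, ne_of_gt (Real.sqrt_pos.mpr hs0), ?_⟩
  have hc2 : Real.sqrt s ^ 2 = s := Real.sq_sqrt hsIcc.1
  show Tendsto (fun n => (g (n + 1) ⬝ᵥ g (n + 1)) / (g n ⬝ᵥ g n)) atTop
    (𝓝 (Real.sqrt s ^ 2 * (kap - 1) ^ 2 /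
      ((Real.sqrt s ^ 2 + kap) * (1 + Real.sqrt s ^ 2 * kap))))
  rw [hc2, hsval]
  exact htr.congr fun n => (hratio n).symm
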